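/- In a layered rewrite system, if t = l̄σ for the linearized left-hand side l̄ of some rule l→r, then rank(t) = 1 + rank(σ), where rank(σ) is the maximum rank of σ(x) over variables x of l̄. -/

import Mathlib

/-- Finite first-order terms. -/
inductive Tm (F V : Type) : Type
  | var : V → Tm F V
  | app : F → List (Tm F V) → Tm F V

namespace Tm
variable {F V W : Type}

/-- Application of a substitution to a term. -/
def subst (σ : V → Tm F W) : Tm F V → Tm F W
  | .var x => σ x
  | .app f l => .app f (l.attach.map fun t => t.1.subst σ)
  decreasing_by simp only [Tm.app.sizeOf_spec]; have := List.sizeOf_lt_of_mem t.2; omega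

/-- Subterm of `t` at a position (a list of argument indices), if any. -/
def at? : Tm F V → List ℕ → Option (Tm F V)
  | t, [] => some t
  | .var _, _ :: _ => none
  | .app _ l, i :: p =>
    match l[i]? with
    | some t => t.at? p
    | none => none

mutual
/-- Linearization of a term: the occurrence of a variable `x` at position `p`
is renamed into the fresh variable `(x, p)`. -/
def lin : Tm F V → List ℕ → Tm F (V × List ℕ)
  | .var x, p => .var (x, p)
  | .app f l, p => .app f (linList l p 0)

def linList : List (Tm F V) → List ℕ → ℕ → List (Tm F (V × List ℕ))
  | [], _, _ => []
  | t :: ts, p, i => lin t (p ++ [i]) :: linList ts p (i + 1)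
end

/-- `x` occurs in `t`. -/
inductive HasVar (x : V) : Tm F V → Prop
  | var : HasVar x (.var x)
  | app {f l t} : t ∈ l → HasVar x t → HasVar x (.app f l)

/-- `t` is not a variable. -/
def NonVar (t : Tm F V) : Prop := ∀ z, t ≠ .var z

/-- Reflexive subterm relation. -/
inductive Sub : Tm F V → Tm F V → Prop
  | refl (t) : Sub t t
  | app {s t f l} : t ∈ l → Sub s t → Sub s (.app f l)

end Tm

variable {F V : Type}

/-- Plain one-step rewriting with the rewrite system `R` (rules instantiated by
substitutions, closure under contexts). -/
inductive Rw (R : Set (Tm F V × Tm F V)) : Tm F V → Tm F V → Prop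
  | rule {l r} (σ : V → Tm F V) : (l, r) ∈ R →
      Rw R (l.subst σ) (r.subst σ)
  | app (f : F) (pre post : List (Tm F V)) {s t} :
      Rw R s t → Rw R (.app f (pre ++ s :: post)) (.app f (pre ++ t :: post))

/-- `Shape rel l u v`: `u` rewrites to `v` (by `rel`-derivations) using steps
occurring only strictly below the non-variable positions of the pattern `l`,
i.e. `u` and `v` coincide with `l` at its non-variable positions and at each
variable position of `l` the subterm of `u` rewrites to that of `v`. -/
inductive Shape (rel : Tm F V → Tm F V → Prop) : Tm F V → Tm F V → Tm F V → Prop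
  | var (x : V) {u v : Tm F V} : Relation.ReflTransGen rel u v → Shape rel (.var x) u v
  | app (f : F) (ls us vs : List (Tm F V)) :
      ls.length = us.length → us.length = vs.length →
      (∀ i (h1 : i < ls.length) (h2 : i < us.length) (h3 : i < vs.length),
        Shape rel ls[i] us[i] vs[i]) →
      Shape rel (.app f ls) (.app f us) (.app f vs)

/-- Sub-rewriting: `u` sub-rewrites to `v` at some position `p` with rule
`l → r` if `u` rewrites (strictly below `p·FPos(l)`) to `u[lθ]_p` and
`v = u[rθ]_p`. -/
inductive SubRw (R : Set (Tm F V × Tm F V)) : Tm F V → Tm F V → Prop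
  | rule {l r u} (σ : V → Tm F V) : (l, r) ∈ R →
      Shape (Rw R) l u (l.subst σ) → SubRw R u (r.subst σ)
  | app (f : F) (pre post : List (Tm F V)) {s t} :
      SubRw R s t → SubRw R (.app f (pre ++ s :: post)) (.app f (pre ++ t :: post))

/-- `v` is overlap-free (OF): no non-variable subterm of the linearization of
`v` unifies with a (variable-disjoint) linearized left-hand side of `R`. -/
def OF (R : Set (Tm F V × Tm F V)) (v : Tm F V) : Prop :=
  ∀ g d, (g, d) ∈ R → ∀ s, Tm.Sub s (Tm.lin v []) → s.NonVar →
    ∀ σ τ : V × List ℕ → Tm F (V × List ℕ), s.subst σ ≠ (Tm.lin g []).subst τ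

/-- `u` is subterm overlap-free (SOF): every subterm of `u` at a non-root
(non-variable) position is overlap-free. -/
def SOF (R : Set (Tm F V × Tm F V)) (u : Tm F V) : Prop :=
  ∀ q : List ℕ, q ≠ [] → ∀ s, u.at? q = some s → s.NonVar → OF R s

/-- The disjointness condition (DLO): whenever a linearized left-hand side `ḡ`
unifies with the subterm at a non-variable position `p` of a linearized
left-hand side `l̄`, both `l|_p` and `g` are subterm overlap-free. `R` is a
layered system iff it satisfies (DLO). -/
def Layered (R : Set (Tm F V × Tm F V)) : Prop :=
  ∀ l r g d, (l, r) ∈ R → (g, d) ∈ R →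
    ∀ (p : List ℕ) (s : Tm F (V × List ℕ)) (w : Tm F V),
      (Tm.lin l []).at? p = some s → l.at? p = some w → s.NonVar →
      (∃ σ τ : V × List ℕ → Tm F (V × List ℕ),
        s.subst σ = (Tm.lin g []).subst τ) →
      SOF R w ∧ SOF R g

/-- `t` is a linearized redex: an instance of the linearized left-hand side of
some rule of `R`. -/
def IsLinRedex (R : Set (Tm F V × Tm F V)) (t : Tm F V) : Prop :=
  ∃ l r, ∃ σ : V × List ℕ → Tm F V, (l, r) ∈ R ∧ t = (Tm.lin l []).subst σ

/-- `rk` is the rank function of the layered system `R`: the rank of a term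
which is not a linearized redex is the maximal rank of its immediate subterms,
and the rank of a linearized redex `t` is `1` plus the supremum of the ranks of
`σ(x)` over all rules `l → r`, matchers `σ` with `t = l̄σ` and variables `x` of
`l̄`. -/
def RankSpec (R : Set (Tm F V × Tm F V)) (rk : Tm F V → ℕ) : Prop :=
  (∀ x : V, rk (.var x) = 0) ∧
  (∀ (f : F) (l : List (Tm F V)), ¬ IsLinRedex R (.app f l) →
    rk (.app f l) = (l.map rk).foldr max 0) ∧
  (∀ t : Tm F V, IsLinRedex R t →
    rk t = 1 + sSup {m | ∃ l r σ x, (l, r) ∈ R ∧ t = (Tm.lin l []).subst σ ∧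
      Tm.HasVar x (Tm.lin l []) ∧ m = rk (σ x)})

namespace Tm
variable {F V W X : Type}

theorem subst_app (σ : V → Tm F W) (f : F) (l : List (Tm F V)) :
    (Tm.app f l).subst σ = Tm.app f (l.map (fun t => t.subst σ)) := by
  rw [subst]
  congr 1
  rw [List.map_congr_left (fun t (_ : t ∈ l.attach) => rfl)]
  exact (List.attach_map_val (l := l) (f := fun t => t.subst σ)) ▸ rfl

theorem subst_subst (σ : V → Tm F W) (τ : W → Tm F X) :
    ∀ t : Tm F V, (t.subst σ).subst τ = t.subst (fun x => (σ x).subst τ)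
  | .var x => by simp [subst]
  | .app f l => by
    rw [subst_app, subst_app, subst_app, List.map_map]
    congr 1
    refine List.map_congr_left fun t ht => ?_
    exact subst_subst σ τ t
  termination_by t => sizeOf t
  decreasing_by simp only [Tm.app.sizeOf_spec]; have := List.sizeOf_lt_of_mem ht; omega

end Tm

namespace Tm

theorem linList_length : ∀ (l : List (Tm F V)) (p : List ℕ) (i : ℕ),
    (linList l p i).length = l.length
  | [], _, _ => rfl
  | t :: ts, p, i => by rw [linList]; simp [linList_length ts p (i+1)]

theorem linList_get? : ∀ (l : List (Tm F V)) (p : List ℕ) (i j : ℕ),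
    (linList l p i)[j]? = (l[j]?).map (fun a => lin a (p ++ [i + j]))
  | [], _, _, _ => by rw [linList]; simp
  | t :: ts, p, i, 0 => by rw [linList]; simp
  | t :: ts, p, i, j+1 => by
    rw [linList]
    have h : i + (j + 1) = (i + 1) + j := by omega
    simp [linList_get? ts p (i+1) j, h]

theorem linList_mem {t : Tm F (V × List ℕ)} {l : List (Tm F V)} {p : List ℕ} {i : ℕ}
    (h : t ∈ linList l p i) :
    ∃ (j : ℕ) (a : Tm F V), l[j]? = some a ∧ t = lin a (p ++ [i + j]) := by
  obtain ⟨j, hj⟩ := List.mem_iff_getElem?.mp h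
  rw [linList_get?] at hj
  obtain ⟨a, ha, ha2⟩ := Option.map_eq_some_iff.mp hj
  exact ⟨j, a, ha, ha2.symm⟩

mutual
theorem lin_shift : ∀ (t : Tm F V) (p q : List ℕ),
    lin t (p ++ q) = (lin t q).subst (fun v => .var (v.1, p ++ v.2))
  | .var x, p, q => by rw [lin, lin, subst]
  | .app f l, p, q => by
    rw [lin, lin, subst_app, linList_shift l p q 0]

theorem linList_shift : ∀ (l : List (Tm F V)) (p q : List ℕ) (i : ℕ),
    linList l (p ++ q) i = (linList l q i).map (fun t => t.subst (fun v => .var (v.1, p ++ v.2)))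
  | [], _, _, _ => rfl
  | t :: ts, p, q, i => by
    rw [linList, linList, List.map_cons, List.append_assoc,
      lin_shift t p (q ++ [i]), linList_shift ts p q (i+1)]
end

theorem nonVar_lin {t : Tm F V} (h : t.NonVar) (p : List ℕ) : (lin t p).NonVar := by
  match t with
  | .var x => exact absurd rfl (h x)
  | .app f l => rw [lin]; intro z hz; cases hz

theorem nonVar_of_lin {t : Tm F V} {p : List ℕ} (h : (lin t p).NonVar) : t.NonVar := by
  match t with
  | .var x => exact absurd rfl (h (x, p))
  | .app f l => intro z hz; cases hz

theorem Sub.sizeOf_le {s t : Tm F V} (h : Sub s t) : sizeOf s ≤ sizeOf t := by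
  induction h with
  | refl => exact le_refl _
  | app hmem hsub ih =>
    have := List.sizeOf_lt_of_mem hmem
    simp only [Tm.app.sizeOf_spec]
    omega

theorem hasVar_of_sub_var {x : V} {t : Tm F V} (h : Sub (.var x) t) : HasVar x t := by
  induction h with
  | refl => exact .var
  | app hmem _ ih => exact .app hmem ih

theorem sub_subst_of_hasVar {x : V} {t : Tm F V} (σ : V → Tm F W) (h : HasVar x t) :
    Sub (σ x) (t.subst σ) := by
  induction h with
  | var => rw [subst]; exact .refl _
  | app hmem _ ih =>
    rw [subst_app]
    exact .app (List.mem_map_of_mem hmem) ih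

theorem lin_sub : ∀ (w : Tm F V) (p : List ℕ) (u : Tm F (V × List ℕ)),
    Sub u (lin w p) → u = lin w p ∨
      ∃ q s', q ≠ [] ∧ w.at? q = some s' ∧ u = lin s' (p ++ q)
  | .var x, p, u, h => by
    rw [lin] at h; cases h; exact Or.inl rfl
  | .app f l, p, u, h => by
    rw [lin] at h
    cases h with
    | refl => exact Or.inl rfl
    | @app t _ _ hmem hsub =>
      obtain ⟨j, a, hget, rfl⟩ := linList_mem hmem
      right
      have hmem' : a ∈ l := List.mem_of_getElem? hget
      have hsz : sizeOf a < sizeOf (Tm.app f l) := by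
        have := List.sizeOf_lt_of_mem hmem'
        simp only [Tm.app.sizeOf_spec]; omega
      rcases lin_sub a (p ++ [0 + j]) u hsub with heq | ⟨q, s', hq, hat, heq⟩
      · refine ⟨[j], a, by simp, ?_, by simpa using heq⟩
        rw [at?, hget]; simp [at?]
      · refine ⟨j :: q, s', by simp, ?_, by simpa using heq⟩
        rw [at?, hget]; exact hat
  termination_by w => sizeOf w
  decreasing_by assumption

end Tm

section Main
variable {F V : Type}

/-- Pattern property: no instance of `u` is an instance of a linearized lhs. -/
def Pat (R : Set (Tm F V × Tm F V)) (u : Tm F (V × List ℕ)) : Prop :=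
  ∀ g d, (g, d) ∈ R → ∀ σ τ : V × List ℕ → Tm F (V × List ℕ),
    u.subst σ ≠ (Tm.lin g []).subst τ

theorem Pat_of_lin {R : Set (Tm F V × Tm F V)} {s0 : Tm F V} (hof : OF R s0)
    (hnv : s0.NonVar) (p0 : List ℕ) : Pat R (Tm.lin s0 p0) := by
  intro g d hgd σ τ heq2
  apply hof g d hgd (Tm.lin s0 []) (Tm.Sub.refl _) (Tm.nonVar_lin hnv [])
    (fun v => σ (v.1, p0 ++ v.2)) τ
  have h1 : Tm.lin s0 p0 = (Tm.lin s0 []).subst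
      (fun v => Tm.var (v.1, p0 ++ v.2)) := by
    have := Tm.lin_shift s0 p0 []
    rwa [List.append_nil] at this
  rw [h1, Tm.subst_subst] at heq2
  rw [← heq2]
  congr 1
  funext v
  rw [Tm.subst]

/-- Every non-variable subterm of a strict subterm of `lin (app f' gs) []`
satisfies `Pat` provided `SOF R (app f' gs)`. -/
theorem SOF_to_Pat {R : Set (Tm F V × Tm F V)} {f' : F} {gs : List (Tm F V)}
    (hsof : SOF R (Tm.app f' gs)) {t' : Tm F (V × List ℕ)}
    (ht' : t' ∈ Tm.linList gs [] 0) {s : Tm F (V × List ℕ)}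
    (hs : Tm.Sub s t') (hnv : s.NonVar) : Pat R s := by
  obtain ⟨j, a, hget, rfl⟩ := Tm.linList_mem ht'
  rcases Tm.lin_sub a ([] ++ [0 + j]) s hs with heq | ⟨q, s', hq, hat, heq⟩
  · subst heq
    refine Pat_of_lin (hsof [j] (by simp) a ?_ (Tm.nonVar_of_lin hnv)) (Tm.nonVar_of_lin hnv) _
    rw [Tm.at?, hget]
    simp [Tm.at?]
  · subst heq
    refine Pat_of_lin (hsof (j :: q) (by simp) s' ?_ (Tm.nonVar_of_lin hnv)) (Tm.nonVar_of_lin hnv) _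
    rw [Tm.at?, hget]
    exact hat

theorem no_var_lhs {R : Set (Tm F V × Tm F V)} {rk : Tm F V → ℕ} (hrk : RankSpec R rk)
    {g d : Tm F V} (hgd : (g, d) ∈ R) : g.NonVar := by
  intro z hz
  subst hz
  have h0 : rk (Tm.var z) = 0 := hrk.1 z
  have hred : IsLinRedex R (Tm.var z) :=
    ⟨_, _, fun _ => Tm.var z, hgd, by rw [Tm.lin, Tm.subst]⟩
  have h1 := hrk.2.2 _ hred
  rw [h0, Nat.add_comm] at h1
  exact Nat.succ_ne_zero _ h1.symm

theorem foldr_max_le {L : List ℕ} {b : ℕ} (h : ∀ a ∈ L, a ≤ b) : L.foldr max 0 ≤ b := by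
  induction L with
  | nil => exact Nat.zero_le _
  | cons a L ih =>
    simp only [List.foldr_cons]
    exact max_le (h a (by simp)) (ih fun x hx => h x (by simp [hx]))

theorem le_foldr_max {L : List ℕ} {a : ℕ} (h : a ∈ L) : a ≤ L.foldr max 0 := by
  induction L with
  | nil => cases h
  | cons c L ih =>
    simp only [List.foldr_cons]
    rcases List.mem_cons.mp h with rfl | h
    · exact le_max_left _ _
    · exact le_trans (ih h) (le_max_right _ _)

theorem exists_bound_list {α : Type} {P : α → ℕ → Prop}
    (mono : ∀ a b b', b ≤ b' → P a b → P a b') :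
    ∀ L : List α, (∀ a ∈ L, ∃ b, P a b) → ∃ b, ∀ a ∈ L, P a b
  | [], _ => ⟨0, by simp⟩
  | a :: L, h => by
    obtain ⟨b1, hb1⟩ := h a (by simp)
    obtain ⟨b2, hb2⟩ := exists_bound_list mono L (fun x hx => h x (by simp [hx]))
    refine ⟨max b1 b2, ?_⟩
    intro x hx
    rcases List.mem_cons.mp hx with rfl | hx
    · exact mono _ _ _ (le_max_left _ _) hb1
    · exact mono _ _ _ (le_max_right _ _) (hb2 x hx)

theorem rank_bdd (rk : Tm F V → ℕ) :
    ∀ t : Tm F V, ∃ b, ∀ s, Tm.Sub s t → rk s ≤ b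
  | .var x => ⟨rk (.var x), by intro s hs; cases hs; exact le_refl _⟩
  | .app f l => by
    have hlist : ∃ b, ∀ a ∈ l, ∀ s, Tm.Sub s a → rk s ≤ b := by
      apply exists_bound_list (fun a b b' hbb h s hs => le_trans (h s hs) hbb)
      intro a ha
      exact rank_bdd rk a
    obtain ⟨b, hb⟩ := hlist
    refine ⟨max b (rk (.app f l)), ?_⟩
    intro s hs
    cases hs with
    | refl => exact le_max_right _ _
    | app hmem hsub => exact le_trans (hb _ hmem _ hsub) (le_max_left _ _)
  termination_by t => sizeOf t
  decreasing_by simp only [Tm.app.sizeOf_spec]; have := List.sizeOf_lt_of_mem ha; omega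

/-- The big matcher-rank set for `t` is bounded above. -/
theorem bigset_bddAbove {R : Set (Tm F V × Tm F V)} (rk : Tm F V → ℕ) (t : Tm F V) :
    BddAbove {m | ∃ l r σ x, (l, r) ∈ R ∧ t = (Tm.lin l []).subst σ ∧
      Tm.HasVar x (Tm.lin l []) ∧ m = rk (σ x)} := by
  obtain ⟨b, hb⟩ := rank_bdd rk t
  refine ⟨b, ?_⟩
  rintro m ⟨l', r', σ', x, _, rfl, hx, rfl⟩
  exact hb _ (Tm.sub_subst_of_hasVar σ' hx)

theorem rank_subst_le {R : Set (Tm F V × Tm F V)} {rk : Tm F V → ℕ} (hrk : RankSpec R rk) :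
    ∀ (u : Tm F (V × List ℕ)), (∀ s, Tm.Sub s u → s.NonVar → Pat R s) →
    ∀ (σ : V × List ℕ → Tm F V) (b : ℕ), (∀ x, Tm.HasVar x u → rk (σ x) ≤ b) →
    rk (u.subst σ) ≤ b
  | .var x, hpat, σ, b, hb => by rw [Tm.subst]; exact hb x .var
  | .app f l, hpat, σ, b, hb => by
    have hnr : ¬ IsLinRedex R ((Tm.app f l).subst σ) := by
      rintro ⟨g, d, τ, hgd, heq⟩
      have h2 : (((Tm.app f l).subst σ).subst (fun x => Tm.var (x, ([] : List ℕ)))) =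
          (((Tm.lin g []).subst τ).subst (fun x => Tm.var (x, ([] : List ℕ)))) := by
        rw [heq]
      rw [Tm.subst_subst, Tm.subst_subst] at h2
      exact hpat _ (.refl _) (fun z h => by cases h) g d hgd _ _ h2
    rw [Tm.subst_app] at hnr ⊢
    rw [hrk.2.1 _ _ hnr]
    apply foldr_max_le
    intro m hm
    rw [List.map_map] at hm
    obtain ⟨a, ha, rfl⟩ := List.mem_map.mp hm
    exact rank_subst_le hrk a (fun s hs hnv => hpat s (.app ha hs) hnv) σ b
      (fun x hx => hb x (.app ha hx))
  termination_by u => sizeOf u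
  decreasing_by simp only [Tm.app.sizeOf_spec]; have := List.sizeOf_lt_of_mem ha; omega

end Main

section Main2
variable {F V : Type}

theorem rank_child_le {R : Set (Tm F V × Tm F V)} {rk : Tm F V → ℕ}
    (hlay : Layered R) (hrk : RankSpec R rk) {f : F} {l : List (Tm F V)} {a : Tm F V}
    (ha : a ∈ l) : rk a ≤ rk (Tm.app f l) := by
  by_cases hred : IsLinRedex R (Tm.app f l)
  · set S := {m | ∃ l' r' σ' x, (l', r') ∈ R ∧ Tm.app f l = (Tm.lin l' []).subst σ' ∧
      Tm.HasVar x (Tm.lin l' []) ∧ m = rk (σ' x)} with hS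
    have hbddS : BddAbove S := bigset_bddAbove rk _
    have hsup : rk (Tm.app f l) = 1 + sSup S := hrk.2.2 _ hred
    suffices h : rk a ≤ sSup S by rw [hsup]; omega
    obtain ⟨g, d, τ, hgd, heq⟩ := hred
    have hgnv : g.NonVar := no_var_lhs hrk hgd
    match g, hgnv with
    | .var z, hgnv => exact absurd rfl (hgnv z)
    | .app f' gs, hgnv =>
      have hsofg : SOF R (Tm.app f' gs) :=
        (hlay _ _ _ _ hgd hgd [] (Tm.lin (Tm.app f' gs) []) (Tm.app f' gs) rfl rfl
          (Tm.nonVar_lin hgnv []) ⟨Tm.var, Tm.var, rfl⟩).1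
      rw [Tm.lin, Tm.subst_app] at heq
      injection heq with hf hl
      rw [hl] at ha
      obtain ⟨u', hu', rfl⟩ := List.mem_map.mp ha
      have hmemS : ∀ x, Tm.HasVar x (Tm.lin (Tm.app f' gs) []) → rk (τ x) ∈ S := by
        intro x hx
        exact ⟨Tm.app f' gs, d, τ, x, hgd, by rw [Tm.lin, Tm.subst_app, hf, hl], hx, rfl⟩
      match u' with
      | .var x =>
        rw [Tm.subst]
        exact le_csSup hbddS (hmemS x (by rw [Tm.lin]; exact .app hu' .var))
      | .app f2 l2 =>
        apply rank_subst_le hrk _ ?_ τ (sSup S) ?_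
        · intro s hs hnv
          exact SOF_to_Pat hsofg hu' hs hnv
        · intro x hx
          exact le_csSup hbddS (hmemS x (by rw [Tm.lin]; exact .app hu' hx))
  · rw [hrk.2.1 _ _ hred]
    exact le_foldr_max (List.mem_map_of_mem (f := rk) ha)

theorem rank_mono {R : Set (Tm F V × Tm F V)} {rk : Tm F V → ℕ}
    (hlay : Layered R) (hrk : RankSpec R rk) {s t : Tm F V} (h : Tm.Sub s t) :
    rk s ≤ rk t := by
  induction h with
  | refl => exact le_refl _
  | app hmem _ ih => exact le_trans ih (rank_child_le hlay hrk hmem)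

theorem key_bound {R : Set (Tm F V × Tm F V)} {rk : Tm F V → ℕ}
    (hlay : Layered R) (hrk : RankSpec R rk) {σ τ : V × List ℕ → Tm F V} {b : ℕ} :
    ∀ (w u : Tm F (V × List ℕ)), (∀ s, Tm.Sub s u → s.NonVar → Pat R s) →
    (∀ x, Tm.HasVar x u → rk (σ x) ≤ b) → u.subst σ = w.subst τ →
    ∀ y, Tm.HasVar y w → rk (τ y) ≤ b
  | .var y', u, hpat, hb, heq, y, hy => by
    cases hy
    rw [Tm.subst] at heq
    rw [← heq]
    match u with
    | .var x => rw [Tm.subst]; exact hb x .var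
    | .app f l => exact rank_subst_le hrk _ hpat σ b hb
  | .app f ws, u, hpat, hb, heq, y, hy => by
    match u with
    | .var x =>
      rw [Tm.subst] at heq
      have h1 : Tm.Sub (τ y) ((Tm.app f ws).subst τ) := Tm.sub_subst_of_hasVar τ hy
      rw [← heq] at h1
      exact le_trans (rank_mono hlay hrk h1) (hb x .var)
    | .app f' us =>
      rw [Tm.subst_app, Tm.subst_app] at heq
      injection heq with hf hl
      cases hy with
      | app hmem hyw =>
        rename_i wj
        obtain ⟨j, hj, rfl⟩ := List.mem_iff_getElem.mp hmem
        have hlen : us.length = ws.length := by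
          have := congrArg List.length hl
          simpa using this
        have hj' : j < us.length := by omega
        have heq_j : us[j].subst σ = ws[j].subst τ := by
          have h2 := congrArg (fun L => L[j]?) hl
          simp only [List.getElem?_map] at h2
          rw [List.getElem?_eq_getElem hj', List.getElem?_eq_getElem hj] at h2
          simpa using h2
        have hjmem : us[j] ∈ us := List.getElem_mem hj'
        have hjsz : sizeOf (ws[j]'hj) < sizeOf (Tm.app f ws) := by
          have := List.sizeOf_lt_of_mem (List.getElem_mem hj)
          simp only [Tm.app.sizeOf_spec]; omega
        exact key_bound hlay hrk (ws[j]'hj) us[j]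
          (fun s hs hnv => hpat s (.app hjmem hs) hnv)
          (fun x hx => hb x (.app hjmem hx)) heq_j y hyw
  termination_by w => sizeOf w
  decreasing_by assumption

theorem nat_sSup_congr {S T : Set ℕ} (h : upperBounds S = upperBounds T) :
    sSup S = sSup T := by
  by_cases hb : BddAbove T
  · have hbS : BddAbove S := by rw [BddAbove, h]; exact hb
    have ub : ∀ (U W : Set ℕ), BddAbove W → upperBounds W ⊆ upperBounds U →
        sSup U ≤ sSup W := by
      intro U W hbW hsub
      rcases Set.eq_empty_or_nonempty U with rfl | hU
      · rw [csSup_empty]; exact Nat.zero_le _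
      · apply csSup_le hU
        intro a ha
        exact hsub (fun x hx => le_csSup hbW hx) ha
    exact le_antisymm (ub S T hb (h ▸ subset_rfl)) (ub T S hbS (h ▸ subset_rfl))
  · have hbS : ¬BddAbove S := by rw [BddAbove, h]; exact hb
    rw [csSup_of_not_bddAbove hbS, csSup_of_not_bddAbove hb]

end Main2
/-- in a layered rewrite system, if `t = l̄σ` for the linearized
left-hand side `l̄` of some rule `l → r`, then
`rank(t) = 1 + rank(σ)`, where `rank(σ)` is the maximum rank of `σ(x)` over the
variables `x` of `l̄`. -/
theorem rank_of_linearized_redex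
    (R : Set (Tm F V × Tm F V)) (hlay : Layered R)
    (rk : Tm F V → ℕ) (hrk : RankSpec R rk)
    (l r : Tm F V) (hlr : (l, r) ∈ R)
    (σ : V × List ℕ → Tm F V) (t : Tm F V) (ht : t = (Tm.lin l []).subst σ) :
    rk t = 1 + sSup {m | ∃ x, Tm.HasVar x (Tm.lin l []) ∧ m = rk (σ x)} := by
  have hlnv : l.NonVar := no_var_lhs hrk hlr
  obtain ⟨f, ls, rfl⟩ : ∃ f ls, l = Tm.app f ls :=
    match l, hlnv with
    | .var x, h => absurd rfl (h x)
    | .app f ls, _ => ⟨f, ls, rfl⟩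
  have hred : IsLinRedex R t := ⟨_, r, σ, hlr, ht⟩
  rw [hrk.2.2 t hred]
  congr 1
  apply nat_sSup_congr
  ext n
  simp only [upperBounds, Set.mem_setOf_eq]
  constructor
  · rintro hub m ⟨x, hx, rfl⟩
    exact hub ⟨_, r, σ, x, hlr, ht, hx, rfl⟩
  · rintro hub m ⟨g, d', τ, y, hgd, htg, hy, rfl⟩
    have hb : ∀ x, Tm.HasVar x (Tm.lin (Tm.app f ls) []) → rk (σ x) ≤ n :=
      fun x hx => hub ⟨x, hx, rfl⟩
    have hgnv : g.NonVar := no_var_lhs hrk hgd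
    obtain ⟨f2, gs, rfl⟩ : ∃ f2 gs, g = Tm.app f2 gs :=
      match g, hgnv with
      | .var z, h => absurd rfl (h z)
      | .app f2 gs, _ => ⟨f2, gs, rfl⟩
    have hsofl : SOF R (Tm.app f ls) :=
      (hlay _ _ _ _ hlr hlr [] (Tm.lin (Tm.app f ls) []) (Tm.app f ls) rfl rfl
        (Tm.nonVar_lin hlnv []) ⟨Tm.var, Tm.var, rfl⟩).1
    have heq : (Tm.lin (Tm.app f ls) []).subst σ = (Tm.lin (Tm.app f2 gs) []).subst τ :=
      ht.symm.trans htg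
    rw [Tm.lin, Tm.subst_app, Tm.lin, Tm.subst_app] at heq
    injection heq with hf hl2
    rw [Tm.lin] at hy
    cases hy with
    | app hmem hyw =>
      obtain ⟨j, hj, rfl⟩ := List.mem_iff_getElem.mp hmem
      have hlen : (Tm.linList ls ([] : List ℕ) 0).length = (Tm.linList gs [] 0).length := by
        have := congrArg List.length hl2
        simpa using this
      have hj2 : j < (Tm.linList ls ([] : List ℕ) 0).length := by rw [hlen]; exact hj
      have heq_j : ((Tm.linList ls ([] : List ℕ) 0)[j]'hj2).subst σ =
          ((Tm.linList gs ([] : List ℕ) 0)[j]'hj).subst τ := by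
        have h2 := congrArg (fun L => L[j]?) hl2
        simp only [List.getElem?_map] at h2
        rw [List.getElem?_eq_getElem hj2, List.getElem?_eq_getElem hj] at h2
        simpa using h2
      exact key_bound hlay hrk ((Tm.linList gs ([] : List ℕ) 0)[j]'hj)
        ((Tm.linList ls ([] : List ℕ) 0)[j]'hj2)
        (fun s hs hnv => SOF_to_Pat hsofl (List.getElem_mem hj2) hs hnv)
        (fun x hx => hb x (by rw [Tm.lin]; exact .app (List.getElem_mem hj2) hx))
        heq_j y hyw
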